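/- arXiv:2111.00225 — 2 statements merged into one kernel-verified Lean document; each statement's English description precedes it below -/
import Mathlib

section
/- If k and j are integers one of which is ≥ 0 and the other is < 0, then K₋ₖ ∘ W ∘ K₋ⱼ = 0. -/
open Complex MeasureTheory

/-- The `j`-th Laurent coefficient `K_j = (2πi)⁻¹ ∮_{|v|=r} v^(-j) R(v) dv` of the
resolvent function `R`. -/
noncomputable def laurentK {H : Type*} [NormedAddCommGroup H] [NormedSpace ℂ H]
    (R : ℂ → (H →L[ℂ] H)) (r : ℝ) (j : ℤ) : H →L[ℂ] H :=
  (2 * (Real.pi : ℂ) * Complex.I)⁻¹ • ∮ v in C(0, r), v ^ (-j) • R v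

/-!
Take radii `ρ < r` and write `K₋ₖ W K₋ⱼ` as a double integral over `|v| = ρ`, `|w| = r` of
`v^k w^j R(v) W R(w)`. The resolvent identity `(w - v) R(v) W R(w) = R(v) - R(w)` splits the
integrand in two. In the first part the `w`-integral of `w^j / (w - v)` is `2πi v^j` if `j ≥ 0` and
`0` if `j < 0`; in the second part, after Fubini, the `v`-integral of `v^k / (w - v)` is `2πi w^k`
if `k < 0` and `0` if `k ≥ 0`. Hence `K₋ₖ W K₋ⱼ = ([j ≥ 0] - [k < 0]) K₋₍ₖ₊ⱼ₎`, and the bracket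
vanishes when `k` and `j` have mixed signs.
-/

open Metric Set Function Real

theorem ContinuousOn.continuous_comp_circleMap_prod {E : Type*} [TopologicalSpace E]
    {X : ℂ → ℂ → E} {c₁ c₂ : ℂ} {R₁ R₂ : ℝ} (hR₁ : 0 ≤ R₁) (hR₂ : 0 ≤ R₂)
    (hX : ContinuousOn (uncurry X) (sphere c₁ R₁ ×ˢ sphere c₂ R₂)) :
    Continuous fun p : ℝ × ℝ => X (circleMap c₁ R₁ p.1) (circleMap c₂ R₂ p.2) :=
  hX.comp_continuous (f := fun p : ℝ × ℝ => (circleMap c₁ R₁ p.1, circleMap c₂ R₂ p.2))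
    (by fun_prop) fun p => ⟨circleMap_mem_sphere c₁ hR₁ p.1, circleMap_mem_sphere c₂ hR₂ p.2⟩

section CircleIntegral

variable {E F : Type*} [NormedAddCommGroup E] [NormedSpace ℂ E]
  [NormedAddCommGroup F] [NormedSpace ℂ F]

theorem ContinuousLinearMap.circleIntegral_comp_comm [CompleteSpace E] [CompleteSpace F]
    (L : E →L[ℂ] F) {f : ℂ → E} {c : ℂ} {R : ℝ} (hf : CircleIntegrable f c R) :
    ∮ z in C(c, R), L (f z) = L (∮ z in C(c, R), f z) := by
  simp only [circleIntegral, ← map_smul]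
  exact L.intervalIntegral_comp_comm hf.out

theorem circleIntegral_comm {X : ℂ → ℂ → E} {c₁ c₂ : ℂ} {R₁ R₂ : ℝ}
    (hR₁ : 0 ≤ R₁) (hR₂ : 0 ≤ R₂) (hX : ContinuousOn (uncurry X) (sphere c₁ R₁ ×ˢ sphere c₂ R₂)) :
    ∮ v in C(c₁, R₁), ∮ w in C(c₂, R₂), X v w = ∮ w in C(c₂, R₂), ∮ v in C(c₁, R₁), X v w := by
  have hF : Continuous fun p : ℝ × ℝ => deriv (circleMap c₁ R₁) p.1 •
      deriv (circleMap c₂ R₂) p.2 • X (circleMap c₁ R₁ p.1) (circleMap c₂ R₂ p.2) := by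
    simp only [deriv_circleMap]
    exact (by fun_prop : Continuous fun p : ℝ × ℝ => circleMap 0 R₁ p.1 * I).smul
      ((by fun_prop : Continuous fun p : ℝ × ℝ => circleMap 0 R₂ p.2 * I).smul
        (hX.continuous_comp_circleMap_prod hR₁ hR₂))
  simp only [circleIntegral, ← intervalIntegral.integral_smul]
  rw [intervalIntegral_intervalIntegral_swap]
  · simp only [smul_comm (deriv (circleMap c₁ R₁) _)]
  · exact (hF.continuousOn.integrableOn_compact (isCompact_uIcc.prod isCompact_uIcc)).mono_set
      (prod_mono uIoc_subset_uIcc uIoc_subset_uIcc)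

theorem circleIntegrable_circleIntegral {X : ℂ → ℂ → E} {c₁ c₂ : ℂ} {R₁ R₂ : ℝ}
    (hR₁ : 0 ≤ R₁) (hR₂ : 0 ≤ R₂) (hX : ContinuousOn (uncurry X) (sphere c₁ R₁ ×ˢ sphere c₂ R₂)) :
    CircleIntegrable (fun v => ∮ w in C(c₂, R₂), X v w) c₁ R₁ := by
  refine Continuous.intervalIntegrable ?_ _ _
  simp only [circleIntegral, deriv_circleMap]
  refine intervalIntegral.continuous_parametric_intervalIntegral_of_continuous' ?_ _ _
  exact (by fun_prop : Continuous fun p : ℝ × ℝ => circleMap 0 R₂ p.2 * I).smul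
    (hX.continuous_comp_circleMap_prod hR₁ hR₂)

theorem circleIntegrable_zpow_smul {f : ℂ → E} {R : ℝ} (hR : 0 < R)
    (hf : ContinuousOn f (sphere 0 R)) (m : ℤ) : CircleIntegrable (fun z => z ^ m • f z) 0 R :=
  ((continuousOn_id.zpow₀ m fun _ hz => .inl (ne_of_mem_sphere hz hR.ne')).smul hf).circleIntegrable
    hR.le

theorem circleIntegral_eq_of_differentiableOn_annulus [CompleteSpace E] {f : ℂ → E} {c : ℂ}
    {r R : ℝ} (hr : 0 < r) (hrR : r ≤ R)
    (hf : DifferentiableOn ℂ f (closedBall c R \ ball c r)) :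
    ∮ z in C(c, R), f z = ∮ z in C(c, r), f z :=
  circleIntegral_eq_of_differentiable_on_annulus_off_countable hr hrR countable_empty
    hf.continuousOn fun _ hz => hf.differentiableAt <| Filter.mem_of_superset
      ((isOpen_ball.sdiff isClosed_closedBall).mem_nhds hz.1)
      (sdiff_subset_sdiff ball_subset_closedBall ball_subset_closedBall)

end CircleIntegral

section Scalar

variable {R : ℝ}

theorem circleIntegral_zpow (hR : R ≠ 0) (n : ℤ) :
    ∮ z in C(0, R), z ^ n = if n = -1 then 2 * π * I else 0 := by
  split_ifs with hn
  · simpa [hn] using circleIntegral.integral_sub_center_inv 0 hR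
  · simpa using circleIntegral.integral_sub_zpow_of_ne hn 0 0 R

theorem circleIntegral_zpow_add_one_mul_inv_sub {c : ℂ} (hR : 0 < R) (hcR : ‖c‖ ≠ R) (n : ℤ) :
    ∮ z in C(0, R), z ^ (n + 1) * (z - c)⁻¹ =
      c * (∮ z in C(0, R), z ^ n * (z - c)⁻¹) + if n = -1 then 2 * π * I else 0 := by
  have hz : ∀ z ∈ sphere (0 : ℂ) R, z ≠ 0 ∧ z - c ≠ 0 := fun z hz => by
    rw [mem_sphere_zero_iff_norm] at hz
    refine ⟨?_, sub_ne_zero.2 ?_⟩ <;> rintro rfl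
    · simp [hR.ne] at hz
    · exact hcR hz
  have hint : CircleIntegrable (fun z => z ^ n * (z - c)⁻¹) 0 R :=
    ContinuousOn.circleIntegrable hR.le fun z hz' =>
      ((continuousAt_zpow₀ z n (.inl (hz z hz').1)).mul
        ((continuousAt_id.sub continuousAt_const).inv₀ (hz z hz').2)).continuousWithinAt
  have hint' : CircleIntegrable (fun z => z ^ n) 0 R :=
    ContinuousOn.circleIntegrable hR.le fun z hz' =>
      (continuousAt_zpow₀ z n (.inl (hz z hz').1)).continuousWithinAt
  rw [← circleIntegral_zpow hR.ne', ← circleIntegral.integral_const_mul,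
    ← circleIntegral.integral_add (f := fun z => c * (z ^ n * (z - c)⁻¹)) hint.const_smul hint']
  refine circleIntegral.integral_congr hR.le fun z hz' => ?_
  obtain ⟨hz0, hzc⟩ := hz z hz'
  simp only [zpow_add_one₀ hz0]
  field_simp
  ring

theorem circleIntegral_zpow_mul_inv_sub {c : ℂ} (hR : 0 < R) (hc : c ≠ 0) (hcR : ‖c‖ ≠ R)
    (n : ℤ) :
    ∮ z in C(0, R), z ^ n * (z - c)⁻¹ =
      c ^ n * ((∮ z in C(0, R), (z - c)⁻¹) - if n < 0 then 2 * π * I else 0) := by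
  set I₀ := ∮ z in C(0, R), (z - c)⁻¹
  -- the right-hand side obeys the recursion of `circleIntegral_zpow_add_one_mul_inv_sub`
  have hrec : ∀ m : ℤ, c ^ (m + 1) * (I₀ - if m + 1 < 0 then 2 * π * I else 0) =
      c * (c ^ m * (I₀ - if m < 0 then 2 * π * I else 0)) +
        if m = -1 then 2 * π * I else 0 := by
    intro m
    rw [zpow_add_one₀ hc]
    by_cases hm : m = -1
    · subst hm
      field_simp
      simp
    · simp only [hm, if_false, add_zero, show (m + 1 < 0 ↔ m < 0) by omega]
      ring
  induction n using Int.induction_on with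
  | zero => simp [I₀]
  | succ m ih =>
    rw [circleIntegral_zpow_add_one_mul_inv_sub hR hcR, ih, hrec]
  | pred m ih =>
    have h := circleIntegral_zpow_add_one_mul_inv_sub hR hcR (-(m : ℤ) - 1)
    have hf := hrec (-(m : ℤ) - 1)
    rw [sub_add_cancel] at h hf
    rw [ih, hf] at h
    exact mul_left_cancel₀ hc (add_right_cancel h).symm

theorem circleIntegral_zpow_mul_inv_sub_of_norm_lt {c : ℂ} (hc : c ≠ 0) (hcR : ‖c‖ < R)
    (n : ℤ) :
    ∮ z in C(0, R), z ^ n * (z - c)⁻¹ = if 0 ≤ n then 2 * π * I * c ^ n else 0 := by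
  have hR : 0 < R := (norm_nonneg c).trans_lt hcR
  rw [circleIntegral_zpow_mul_inv_sub hR hc hcR.ne,
    circleIntegral.integral_sub_inv_of_mem_ball (mem_ball_zero_iff.2 hcR)]
  split_ifs <;> first | omega | ring

theorem circleIntegral_zpow_mul_inv_sub_of_lt_norm {c : ℂ} (hR : 0 < R) (hcR : R < ‖c‖)
    (n : ℤ) :
    ∮ z in C(0, R), z ^ n * (c - z)⁻¹ = if n < 0 then 2 * π * I * c ^ n else 0 := by
  have hc : c ≠ 0 := norm_pos_iff.1 (hR.trans hcR)
  have hcz : ∀ z ∈ closedBall (0 : ℂ) R, z - c ≠ 0 := fun z hz =>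
    sub_ne_zero.2 (ne_of_apply_ne norm ((mem_closedBall_zero_iff.1 hz).trans_lt hcR).ne)
  have hI₀ : ∮ z in C(0, R), (z - c)⁻¹ = 0 :=
    circleIntegral_eq_zero_of_differentiable_on_off_countable hR.le countable_empty
      (fun z hz => ((continuousAt_id.sub continuousAt_const).inv₀ (hcz z hz)).continuousWithinAt)
      fun z hz => (differentiableAt_id.sub_const c).inv (hcz z (ball_subset_closedBall hz.1))
  have hneg : ∀ z : ℂ, z ^ n * (c - z)⁻¹ = -1 * (z ^ n * (z - c)⁻¹) := fun z => by
    rw [← neg_sub, inv_neg]; ring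
  simp only [hneg, circleIntegral.integral_const_mul,
    circleIntegral_zpow_mul_inv_sub hR hc hcR.ne', hI₀]
  split_ifs <;> ring

end Scalar

section NormedAlgebra

variable {A : Type*} [NormedRing A] [NormedAlgebra ℂ A] [CompleteSpace A]

theorem circleIntegral.integral_const_mul_of_integrable (a : A) {f : ℂ → A} {c : ℂ} {R : ℝ}
    (hf : CircleIntegrable f c R) :
    ∮ z in C(c, R), a * f z = a * ∮ z in C(c, R), f z :=
  (ContinuousLinearMap.mul ℂ A a).circleIntegral_comp_comm hf

theorem circleIntegral.integral_mul_const_of_integrable (a : A) {f : ℂ → A} {c : ℂ} {R : ℝ}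
    (hf : CircleIntegrable f c R) :
    ∮ z in C(c, R), f z * a = (∮ z in C(c, R), f z) * a :=
  ((ContinuousLinearMap.mul ℂ A).flip a).circleIntegral_comp_comm hf

theorem mul_mul_circleIntegral_zpow_smul_of_resolvent_identity {S : ℂ → A} {W : A} {v : ℂ}
    {r : ℝ} (hv : v ≠ 0) (hvr : ‖v‖ < r) (hS : ContinuousOn S (sphere 0 r))
    (hres : ∀ w ∈ sphere (0 : ℂ) r, (w - v) • (S v * W * S w) = S v - S w) (j : ℤ) :
    S v * W * (∮ w in C(0, r), w ^ j • S w) =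
      (if 0 ≤ j then 2 * π * I * v ^ j else 0) • S v -
        ∮ w in C(0, r), (w ^ j * (w - v)⁻¹) • S w := by
  have hr : 0 < r := (norm_nonneg v).trans_lt hvr
  have hne : ∀ w ∈ sphere (0 : ℂ) r, w - v ≠ 0 := fun w hw =>
    sub_ne_zero.2 fun h => hvr.ne (by rw [← h, mem_sphere_zero_iff_norm.1 hw])
  have hK : ContinuousOn (fun w => w ^ j * (w - v)⁻¹) (sphere 0 r) :=
    (continuousOn_id.zpow₀ j fun w hw => .inl (ne_of_mem_sphere hw hr.ne')).mul
      ((continuousOn_id.sub continuousOn_const).inv₀ hne)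
  have hsplit : EqOn (fun w => S v * W * (w ^ j • S w))
      (fun w => (w ^ j * (w - v)⁻¹) • S v - (w ^ j * (w - v)⁻¹) • S w) (sphere 0 r) :=
    fun w hw => by
      dsimp only
      rw [mul_smul_comm, (eq_inv_smul_iff₀ (hne w hw)).2 (hres w hw), smul_smul, smul_sub]
  have hint₁ : CircleIntegrable (fun w => (w ^ j * (w - v)⁻¹) • S v) 0 r :=
    (hK.smul continuousOn_const).circleIntegrable hr.le
  have hint₂ : CircleIntegrable (fun w => (w ^ j * (w - v)⁻¹) • S w) 0 r :=
    (hK.smul hS).circleIntegrable hr.le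
  rw [← circleIntegral.integral_const_mul_of_integrable _ (circleIntegrable_zpow_smul hr hS j),
    circleIntegral.integral_congr hr.le hsplit, circleIntegral.integral_sub hint₁ hint₂,
    circleIntegral.integral_smul_const, circleIntegral_zpow_mul_inv_sub_of_norm_lt hv hvr]

theorem circleIntegral_zpow_smul_mul_mul_circleIntegral_zpow_smul {S : ℂ → A} {W : A}
    {ρ r : ℝ} (hρ : 0 < ρ) (hρr : ρ < r)
    (hSρ : ContinuousOn S (sphere 0 ρ)) (hSr : ContinuousOn S (sphere 0 r))
    (hres : ∀ v ∈ sphere (0 : ℂ) ρ, ∀ w ∈ sphere (0 : ℂ) r,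
      (w - v) • (S v * W * S w) = S v - S w)
    (k j : ℤ) :
    (∮ v in C(0, ρ), v ^ k • S v) * W * (∮ w in C(0, r), w ^ j • S w) =
      (if 0 ≤ j then 2 * π * I else 0) • (∮ v in C(0, ρ), v ^ (k + j) • S v) -
        (if k < 0 then 2 * π * I else 0) • ∮ w in C(0, r), w ^ (k + j) • S w := by
  have hr : 0 < r := hρ.trans hρr
  set a : ℂ := if 0 ≤ j then 2 * π * I else 0
  set b : ℂ := if k < 0 then 2 * π * I else 0
  set Z : ℂ → ℂ → A := fun v w => (v ^ k * (w ^ j * (w - v)⁻¹)) • S w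
  have hZ : ContinuousOn (uncurry Z) (sphere 0 ρ ×ˢ sphere 0 r) :=
    ((continuousOn_fst.zpow₀ k fun p hp => .inl (ne_of_mem_sphere hp.1 hρ.ne')).mul
      ((continuousOn_snd.zpow₀ j fun p hp => .inl (ne_of_mem_sphere hp.2 hr.ne')).mul
        ((continuousOn_snd.sub continuousOn_fst).inv₀ fun p hp => sub_ne_zero.2 fun h =>
          hρr.ne (by rw [← mem_sphere_zero_iff_norm.1 hp.1, ← h,
            mem_sphere_zero_iff_norm.1 hp.2])))).smul
      (hSr.comp continuousOn_snd fun p hp => hp.2)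
  have hinner : ∀ v ∈ sphere (0 : ℂ) ρ, (v ^ k • S v) * (W * ∮ w in C(0, r), w ^ j • S w) =
      a • (v ^ (k + j) • S v) - ∮ w in C(0, r), Z v w := by
    intro v hv
    have hv0 : v ≠ 0 := ne_of_mem_sphere hv hρ.ne'
    rw [smul_mul_assoc, ← mul_assoc, mul_mul_circleIntegral_zpow_smul_of_resolvent_identity hv0
      ((mem_sphere_zero_iff_norm.1 hv).trans_lt hρr) hSr (hres v hv) j,
      smul_sub, ← circleIntegral.integral_smul, smul_smul, ← ite_zero_mul, zpow_add₀ hv0]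
    simp only [Z, smul_smul, a]
    congr 2
    ring
  have houter : ∀ w ∈ sphere (0 : ℂ) r, ∮ v in C(0, ρ), Z v w = b • (w ^ (k + j) • S w) := by
    intro w hw
    have hZw : ∀ v, Z v w = (v ^ k * (w - v)⁻¹) • (w ^ j • S w) := fun v => by
      simp only [Z, smul_smul]
      congr 1
      ring
    simp only [hZw, circleIntegral.integral_smul_const]
    rw [circleIntegral_zpow_mul_inv_sub_of_lt_norm hρ
      (hρr.trans_eq (mem_sphere_zero_iff_norm.1 hw).symm), ← ite_zero_mul, smul_smul,
      zpow_add₀ (ne_of_mem_sphere hw hr.ne'), smul_smul, mul_assoc]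
  rw [mul_assoc, ← circleIntegral.integral_mul_const_of_integrable _
      (circleIntegrable_zpow_smul hρ hSρ k),
    circleIntegral.integral_congr hρ.le hinner, circleIntegral.integral_sub,
    circleIntegral.integral_smul, circleIntegral_comm hρ.le hr.le hZ,
    circleIntegral.integral_congr hr.le houter, circleIntegral.integral_smul]
  · exact (circleIntegrable_zpow_smul hρ hSρ (k + j)).smul a
  · exact circleIntegrable_circleIntegral hρ.le hr.le hZ

end NormedAlgebra

theorem pencil_resolvent_identity {𝕜 A : Type*} [CommRing 𝕜] [Ring A] [Algebra 𝕜 A]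
    {N₀ W Rv Rw : A} {v w : 𝕜} (hv : Rv * (N₀ + v • W) = 1) (hw : (N₀ + w • W) * Rw = 1) :
    (w - v) • (Rv * W * Rw) = Rv - Rw := by
  calc (w - v) • (Rv * W * Rw) = Rv * (N₀ + w • W) * Rw - Rv * (N₀ + v • W) * Rw := by
        simp only [mul_add, add_mul, mul_smul_comm, smul_mul_assoc, sub_smul]
        abel
    _ = Rv - Rw := by rw [hv, mul_assoc, hw, mul_one, one_mul]

theorem DifferentiableOn.of_two_sided_inverse {𝕜 E A : Type*} [NontriviallyNormedField 𝕜]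
    [NormedAddCommGroup E] [NormedSpace 𝕜 E] [NormedRing A] [NormedAlgebra 𝕜 A] [CompleteSpace A]
    {N R : E → A} {U : Set E} (hN : DifferentiableOn 𝕜 N U)
    (hNR : ∀ x ∈ U, N x * R x = 1 ∧ R x * N x = 1) : DifferentiableOn 𝕜 R U := by
  have hinv : ∀ x ∈ U, Ring.inverse (N x) = R x := fun x hx =>
    Ring.inverse_unit ⟨N x, R x, (hNR x hx).1, (hNR x hx).2⟩
  intro x hx
  exact ((hN x hx).inverse ⟨⟨N x, R x, (hNR x hx).1, (hNR x hx).2⟩, rfl⟩).congr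
    (fun y hy => (hinv y hy).symm) (hinv x hx).symm

/-- If `k` and `j` are integers one of which is `≥ 0` and the other `< 0`,
then `K₋ₖ ∘ W ∘ K₋ⱼ = 0`. -/
theorem laurentK_comp_perturbation_comp_laurentK_eq_zero_of_mixed_signs
    {H : Type*} [NormedAddCommGroup H] [InnerProductSpace ℂ H] [CompleteSpace H]
    (N₀ W : H →L[ℂ] H) (z₀ : ℂ) (r : ℝ) (hr : 0 < r)
    (R : ℂ → (H →L[ℂ] H))
    (hR : ∀ v : ℂ, v ≠ 0 → ‖v‖ ≤ r →
      (N₀ + v • W - z₀ • (1 : H →L[ℂ] H)) * R v = 1 ∧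
      R v * (N₀ + v • W - z₀ • (1 : H →L[ℂ] H)) = 1)
    (k j : ℤ) (hkj : (0 ≤ k ∧ j < 0) ∨ (k < 0 ∧ 0 ≤ j)) :
    laurentK R r (-k) * W * laurentK R r (-j) = 0 := by
  set U := closedBall (0 : ℂ) r \ {0}
  have hρ : 0 < r / 2 := half_pos hr
  have hinv : ∀ v ∈ U, (N₀ - z₀ • 1 + v • W) * R v = 1 ∧ R v * (N₀ - z₀ • 1 + v • W) = 1 :=
    fun v hv => by
      rw [sub_add_eq_add_sub]
      exact hR v hv.2 (mem_closedBall_zero_iff.1 hv.1)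
  have hdiff : DifferentiableOn ℂ R U := .of_two_sided_inverse (by fun_prop) hinv
  have hsphere : ∀ s : ℝ, 0 < s → s ≤ r → sphere (0 : ℂ) s ⊆ U := fun s hs hsr z hz =>
    ⟨sphere_subset_closedBall.trans (closedBall_subset_closedBall hsr) hz,
      ne_of_mem_sphere hz hs.ne'⟩
  have hsρ := hsphere _ hρ (half_le_self hr.le)
  have hsr := hsphere _ hr le_rfl
  have hradius : ∀ m : ℤ, ∮ v in C(0, r), v ^ m • R v = ∮ v in C(0, r / 2), v ^ m • R v :=
    fun m => circleIntegral_eq_of_differentiableOn_annulus hρ (half_le_self hr.le)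
      (((differentiableOn_zpow m U (.inl fun h => h.2 rfl)).smul hdiff).mono
        (sdiff_subset_sdiff_right (singleton_subset_iff.2 (mem_ball_self hρ))))
  have hprod := circleIntegral_zpow_smul_mul_mul_circleIntegral_zpow_smul hρ (half_lt_self hr)
    (hdiff.continuousOn.mono hsρ) (hdiff.continuousOn.mono hsr)
    (fun v hv w hw => pencil_resolvent_identity (hinv v (hsρ hv)).2 (hinv w (hsr hw)).1) k j
  simp only [laurentK, neg_neg, smul_mul_assoc, mul_smul_comm]
  rw [hradius k, hprod]
  rcases hkj with ⟨hk, hj⟩ | ⟨hk, hj⟩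
  · simp [not_le.2 hj, not_lt.2 hk]
  · simp [hk, hj, hradius]
end

section
/- Let φ*(v) = ψ(conj(v)), with ψ : D → ℋ analytic, satisfy N_v* φ*(v) = conj(z(v)) φ*(v) for all v ∈ D and ⟨φ*(0), φ(0)⟩ ≠ 0. Then for every integer k ≥ 1 the following are equivalent: (1) the vectors W φ^(j)(0) for 0 ≤ j ≤ k−2 are orthogonal to ker(N₀* − conj(z₀)) (the eigenpath φ has order at least k at 0); (2) the vectors W ψ^(j)(0) for 0 ≤ j ≤ k−2 are orthogonal to some vector χ ∈ ker(N₀ − z₀) with ⟨ψ(0), χ⟩ ≠ 0; (3) the vectors W ψ^(j)(0) for 0 ≤ j ≤ k−2 are orthogonal to ker(N₀ − z₀) (the conjugate eigenpath φ* has order at least k at 0); (4) z^(j)(0) = 0 for j = 1, …, k−1; (5) (N₀* − conj(z₀)) ψ^(j)(0) = −j W ψ^(j−1)(0) for j = 1, …, k−1. -/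
/-!
Differentiating `(A + v • W) φ(v) = z(v) • φ(v)` `j` times at `0` gives
`A φ⁽ʲ⁾ + j • W φ⁽ʲ⁻¹⁾ = ∑ᵢ (j choose i) • z⁽ⁱ⁾ • φ⁽ʲ⁻ⁱ⁾`. Once `z⁽ⁱ⁾(0) = 0` for `0 < i < j`
this reads `(A - z₀) φ⁽ʲ⁾ + j • W φ⁽ʲ⁻¹⁾ = z⁽ʲ⁾(0) • φ(0)`, and pairing with an eigenvector `χ` of
`A*` for `conj z₀` kills the first term: `j ⟪χ, W φ⁽ʲ⁻¹⁾⟫ = z⁽ʲ⁾(0) ⟪χ, φ(0)⟫`. Induction on `j`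
then trades vanishing derivatives of `z` for orthogonality conditions. The conjugate eigenpath
fits the same scheme: `ψ` is an eigenpath of `w ↦ N₀* + w • W` with eigenvalue
`conj (z (conj w))`, whose derivatives at `0` are the conjugates of those of `z`.
-/

open ContinuousLinearMap Filter Finset
open scoped InnerProductSpace Topology ContDiff ComplexConjugate

section IteratedDeriv

variable {𝕜 : Type*} [NontriviallyNormedField 𝕜]
  {F G : Type*} [NormedAddCommGroup F] [NormedSpace 𝕜 F] [NormedAddCommGroup G] [NormedSpace 𝕜 G]
  {n : ℕ} {x : 𝕜}

theorem ContinuousLinearMap.iteratedDeriv_comp_left (L : F →L[𝕜] G) {f : 𝕜 → F}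
    (hf : ContDiffAt 𝕜 n f x) :
    iteratedDeriv n (fun y => L (f y)) x = L (iteratedDeriv n f x) := by
  have h := L.iteratedFDeriv_comp_left hf (i := n) le_rfl
  simp only [iteratedDeriv_eq_iteratedFDeriv, Function.comp_def] at h ⊢
  rw [h]
  rfl

theorem iteratedDeriv_fun_smul {f : 𝕜 → 𝕜} {g : 𝕜 → F} (hf : ContDiffAt 𝕜 n f x)
    (hg : ContDiffAt 𝕜 n g x) :
    iteratedDeriv n (fun y => f y • g y) x =
      ∑ i ∈ range (n + 1), n.choose i • iteratedDeriv i f x • iteratedDeriv (n - i) g x := by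
  have h := iteratedDerivWithin_smul (Set.mem_univ x) uniqueDiffOn_univ
    hf.contDiffWithinAt hg.contDiffWithinAt
  simp only [iteratedDerivWithin_univ] at h
  exact h

theorem iteratedDeriv_id_smul_zero {g : 𝕜 → F} (hg : ContDiffAt 𝕜 n g 0) :
    iteratedDeriv n (fun y => y • g y) 0 = (n : 𝕜) • iteratedDeriv (n - 1) g 0 := by
  rw [iteratedDeriv_fun_smul (f := fun y => y) contDiffAt_id hg, sum_eq_single 1]
  · simp [iteratedDeriv_fun_id_zero, Nat.cast_smul_eq_nsmul]
  · intro i _ hi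
    simp [iteratedDeriv_fun_id_zero, hi]
  · intro h
    obtain rfl : n = 0 := by simpa using h
    simp

end IteratedDeriv

theorem iteratedDeriv_conj_conj {𝕜 : Type*} [NontriviallyNormedField 𝕜] [StarRing 𝕜]
    [NormedStarGroup 𝕜] (f : 𝕜 → 𝕜) (n : ℕ) :
    iteratedDeriv n (conj ∘ f ∘ conj) = conj ∘ iteratedDeriv n f ∘ conj := by
  induction n with
  | zero => simp
  | succ n ih => rw [iteratedDeriv_succ, ih, deriv_conj_conj, iteratedDeriv_succ]

theorem AnalyticAt.conj_conj {f : ℂ → ℂ} {x : ℂ} (hf : AnalyticAt ℂ f (conj x)) :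
    AnalyticAt ℂ (conj ∘ f ∘ conj) x := by
  rw [Complex.analyticAt_iff_eventually_differentiableAt] at hf ⊢
  have hconj : Tendsto conj (𝓝 x) (𝓝 (conj x)) := Complex.continuous_conj.tendsto x
  filter_upwards [hconj.eventually hf] with w hw
  simpa using hw

section Eigenpath

variable {𝕜 : Type*} [NontriviallyNormedField 𝕜] {E : Type*} [NormedAddCommGroup E]
  [NormedSpace 𝕜 E]

/-- `φ` is an eigenpath of the pencil `v ↦ A + v • W` at `v = 0` with eigenvalue branch `z`,
taken smooth rather than analytic. -/
structure IsEigenpath (A W : E →L[𝕜] E) (z : 𝕜 → 𝕜) (φ : 𝕜 → E) : Prop where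
  contDiffAt_eigenvalue : ContDiffAt 𝕜 ∞ z 0
  contDiffAt_eigenvector : ContDiffAt 𝕜 ∞ φ 0
  eventually_apply_eq : ∀ᶠ v in 𝓝 0, (A + v • W) (φ v) = z v • φ v

namespace IsEigenpath

variable {A W : E →L[𝕜] E} {z : 𝕜 → 𝕜} {φ : 𝕜 → E} (h : IsEigenpath A W z φ)
include h

theorem apply_eq : A (φ 0) = z 0 • φ 0 := by
  simpa using h.eventually_apply_eq.self_of_nhds

/-- The eigenvalue equation differentiated `n` times at `0`. -/
theorem apply_iteratedDeriv_add (n : ℕ) :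
    A (iteratedDeriv n φ 0) + (n : 𝕜) • W (iteratedDeriv (n - 1) φ 0) =
      ∑ i ∈ range (n + 1), n.choose i • iteratedDeriv i z 0 • iteratedDeriv (n - i) φ 0 := by
  have hz : ContDiffAt 𝕜 n z 0 := h.contDiffAt_eigenvalue.of_le (mod_cast le_top)
  have hφ : ContDiffAt 𝕜 n φ 0 := h.contDiffAt_eigenvector.of_le (mod_cast le_top)
  have hAφ : ContDiffAt 𝕜 n (fun v => A (φ v)) 0 := A.contDiff.contDiffAt.comp 0 hφ
  have hWφ : ContDiffAt 𝕜 n (fun v => W (φ v)) 0 := W.contDiff.contDiffAt.comp 0 hφ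
  have hvWφ : ContDiffAt 𝕜 n (fun v => v • W (φ v)) 0 := contDiffAt_id.smul hWφ
  calc A (iteratedDeriv n φ 0) + (n : 𝕜) • W (iteratedDeriv (n - 1) φ 0)
      = iteratedDeriv n (fun v => A (φ v) + v • W (φ v)) 0 := by
        rw [iteratedDeriv_fun_add hAφ hvWφ,
          A.iteratedDeriv_comp_left hφ, iteratedDeriv_id_smul_zero hWφ,
          W.iteratedDeriv_comp_left (hφ.of_le (mod_cast n.sub_le 1))]
    _ = iteratedDeriv n (fun v => z v • φ v) 0 := by
        refine EventuallyEq.iteratedDeriv_eq n ?_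
        filter_upwards [h.eventually_apply_eq] with v hv
        simpa using hv
    _ = _ := iteratedDeriv_fun_smul hz hφ

theorem apply_iteratedDeriv_add_of_forall_lt {n : ℕ} (hn : 1 ≤ n)
    (hz : ∀ i, 1 ≤ i → i < n → iteratedDeriv i z 0 = 0) :
    A (iteratedDeriv n φ 0) + (n : 𝕜) • W (iteratedDeriv (n - 1) φ 0) =
      z 0 • iteratedDeriv n φ 0 + iteratedDeriv n z 0 • φ 0 := by
  rw [h.apply_iteratedDeriv_add, sum_range_succ, sum_eq_single 0]
  · simp
  · intro i hi hi0
    rw [hz i (Nat.one_le_iff_ne_zero.mpr hi0) (mem_range.mp hi), zero_smul, smul_zero]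
  · intro h0
    simp at h0
    omega

theorem forall_iteratedDeriv_eq_zero_iff (hφ0 : φ 0 ≠ 0) (k : ℕ) :
    (∀ j, 1 ≤ j → j < k → iteratedDeriv j z 0 = 0) ↔
      ∀ j, 1 ≤ j → j < k → (A - z 0 • (1 : E →L[𝕜] E)) (iteratedDeriv j φ 0) =
        (-(j : 𝕜)) • W (iteratedDeriv (j - 1) φ 0) := by
  simp only [sub_apply, smul_apply, one_apply_eq_self, neg_smul, sub_eq_iff_eq_add, neg_add_eq_sub,
    eq_sub_iff_add_eq]
  refine ⟨fun hz j hj hjk => ?_, fun hrec j => ?_⟩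
  · rw [h.apply_iteratedDeriv_add_of_forall_lt hj fun i hi hij => hz i hi (hij.trans hjk),
      hz j hj hjk, zero_smul, add_zero]
  · induction j using Nat.strong_induction_on with
    | _ j ih =>
      intro hj hjk
      have key := h.apply_iteratedDeriv_add_of_forall_lt hj fun i hi hij =>
        ih i hij hi (hij.trans hjk)
      rw [hrec j hj hjk, left_eq_add, smul_eq_zero] at key
      exact key.resolve_right hφ0

end IsEigenpath

end Eigenpath

section InnerProduct

variable {𝕜 : Type*} [RCLike 𝕜] {H : Type*} [NormedAddCommGroup H] [InnerProductSpace 𝕜 H]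
  [CompleteSpace H]

theorem inner_apply_of_adjoint_apply_eq {A : H →L[𝕜] H} {χ : H} {c : 𝕜}
    (hχ : adjoint A χ = conj c • χ) (x : H) : ⟪χ, A x⟫_𝕜 = c * ⟪χ, x⟫_𝕜 := by
  rw [← adjoint_inner_left, hχ, inner_smul_left, RCLike.conj_conj]

namespace IsEigenpath

variable {A W : H →L[𝕜] H} {z : 𝕜 → 𝕜} {φ : 𝕜 → H} (h : IsEigenpath A W z φ)
include h

theorem inner_apply_iteratedDeriv_eq_zero {k : ℕ}
    (hz : ∀ i, 1 ≤ i → i < k → iteratedDeriv i z 0 = 0) {j : ℕ} (hj : j + 2 ≤ k) {χ : H}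
    (hχ : adjoint A χ = conj (z 0) • χ) : ⟪χ, W (iteratedDeriv j φ 0)⟫_𝕜 = 0 := by
  have key := congrArg (⟪χ, ·⟫_𝕜) <| h.apply_iteratedDeriv_add_of_forall_lt (n := j + 1)
    (by omega) fun i hi hij => hz i hi (by omega)
  simp only [hz (j + 1) (by omega) (by omega), zero_smul, add_zero, Nat.add_sub_cancel,
    inner_add_right, inner_smul_right, inner_apply_of_adjoint_apply_eq hχ, add_eq_left] at key
  exact (mul_eq_zero.mp key).resolve_left (Nat.cast_ne_zero.mpr j.succ_ne_zero)

theorem iteratedDeriv_eq_zero_of_inner_eq_zero {k : ℕ} {χ : H}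
    (hχ : adjoint A χ = conj (z 0) • χ) (hpair : ⟪χ, φ 0⟫_𝕜 ≠ 0)
    (horth : ∀ j, j + 2 ≤ k → ⟪χ, W (iteratedDeriv j φ 0)⟫_𝕜 = 0) :
    ∀ i, 1 ≤ i → i < k → iteratedDeriv i z 0 = 0 := by
  intro i
  induction i using Nat.strong_induction_on with
  | _ i ih =>
    intro hi hik
    have key := congrArg (⟪χ, ·⟫_𝕜) <| h.apply_iteratedDeriv_add_of_forall_lt hi
      fun l hl hli => ih l hli hl (hli.trans hik)
    simp only [inner_add_right, inner_smul_right, inner_apply_of_adjoint_apply_eq hχ,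
      horth (i - 1) (by omega), mul_zero, add_zero, left_eq_add] at key
    exact (mul_eq_zero.mp key).resolve_right hpair

end IsEigenpath

end InnerProduct

theorem isEigenpath_adjoint {H : Type*} [NormedAddCommGroup H] [InnerProductSpace ℂ H]
    [CompleteSpace H] {A W : H →L[ℂ] H} (hW : IsSelfAdjoint W) {z : ℂ → ℂ} {ψ : ℂ → H}
    (hz : AnalyticAt ℂ z 0) (hψ : AnalyticAt ℂ ψ 0)
    (heq : ∀ᶠ v in 𝓝 0, adjoint (A + v • W) (ψ (conj v)) = conj (z v) • ψ (conj v)) :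
    IsEigenpath (adjoint A) W (conj ∘ z ∘ conj) ψ where
  contDiffAt_eigenvalue := (AnalyticAt.conj_conj (by simpa using hz)).contDiffAt
  contDiffAt_eigenvector := hψ.contDiffAt
  eventually_apply_eq := by
    have hconj : Tendsto conj (𝓝 (0 : ℂ)) (𝓝 0) := by
      simpa using Complex.continuous_conj.tendsto 0
    filter_upwards [hconj.eventually heq] with w hw
    rw [map_add, map_smulₛₗ, hW.adjoint_eq, Complex.conj_conj] at hw
    simpa using hw

theorem eigenpath_and_conjugate_eigenpath_order_tfae_general
    {H : Type*} [NormedAddCommGroup H] [InnerProductSpace ℂ H] [CompleteSpace H]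
    (N₀ W : H →L[ℂ] H) (hW : IsSelfAdjoint W)
    (ρ : ℝ) (hρ : 0 < ρ)
    (z : ℂ → ℂ) (φ : ℂ → H)
    (hz : AnalyticOnNhd ℂ z (Metric.ball (0 : ℂ) ρ))
    (hφ : AnalyticOnNhd ℂ φ (Metric.ball (0 : ℂ) ρ))
    (heig : ∀ v ∈ Metric.ball (0 : ℂ) ρ, (N₀ + v • W) (φ v) = z v • φ v)
    (z₀ : ℂ) (hz₀ : z₀ = z 0)
    -- the conjugate eigenpath `φ*(v) = ψ(conj v)` with `ψ` analytic
    (ψ : ℂ → H) (hψ : AnalyticOnNhd ℂ ψ (Metric.ball (0 : ℂ) ρ))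
    (heigψ : ∀ v ∈ Metric.ball (0 : ℂ) ρ,
      adjoint (N₀ + v • W) (ψ ((starRingEnd ℂ) v)) =
        (starRingEnd ℂ) (z v) • ψ ((starRingEnd ℂ) v))
    (hpair : ⟪ψ 0, φ 0⟫_ℂ ≠ 0)
    (k : ℕ) :
    [ -- (1) `φ` has order at least `k` at `0`
      ∀ j : ℕ, j + 2 ≤ k → ∀ χ : H, adjoint N₀ χ = (starRingEnd ℂ) z₀ • χ →
        ⟪χ, W (iteratedDeriv j φ 0)⟫_ℂ = 0,
      -- (2) `W ψ^(j)(0)` orthogonal to some eigenvector `χ` with `⟪ψ 0, χ⟫ ≠ 0`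
      ∃ χ : H, N₀ χ = z₀ • χ ∧ ⟪ψ 0, χ⟫_ℂ ≠ 0 ∧
        ∀ j : ℕ, j + 2 ≤ k → ⟪W (iteratedDeriv j ψ 0), χ⟫_ℂ = 0,
      -- (3) `φ*` has order at least `k` at `0`
      ∀ j : ℕ, j + 2 ≤ k → ∀ χ : H, N₀ χ = z₀ • χ →
        ⟪W (iteratedDeriv j ψ 0), χ⟫_ℂ = 0,
      -- (4) `z^(j)(0) = 0` for `j = 1, …, k-1`
      ∀ j : ℕ, 1 ≤ j → j < k → iteratedDeriv j z 0 = 0,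
      -- (5) `(N₀* - conj z₀) ψ^(j)(0) = -j W ψ^(j-1)(0)` for `j = 1, …, k-1`
      ∀ j : ℕ, 1 ≤ j → j < k →
        (adjoint N₀ - (starRingEnd ℂ) z₀ • (1 : H →L[ℂ] H)) (iteratedDeriv j ψ 0) =
          (-(j : ℂ)) • W (iteratedDeriv (j - 1) ψ 0) ].TFAE := by
  subst hz₀
  have h0 : (0 : ℂ) ∈ Metric.ball (0 : ℂ) ρ := Metric.mem_ball_self hρ
  have hball : Metric.ball (0 : ℂ) ρ ∈ 𝓝 0 := Metric.ball_mem_nhds 0 hρ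
  have hφpath : IsEigenpath N₀ W z φ :=
    ⟨(hz 0 h0).contDiffAt, (hφ 0 h0).contDiffAt, eventually_of_mem hball heig⟩
  have hψpath : IsEigenpath (adjoint N₀) W (conj ∘ z ∘ conj) ψ :=
    isEigenpath_adjoint hW (hz 0 h0) (hψ 0 h0) (eventually_of_mem hball heigψ)
  have hψ0 : adjoint N₀ (ψ 0) = conj (z 0) • ψ 0 := by simpa using hψpath.apply_eq
  have hψ0_ne : ψ 0 ≠ 0 := fun h => hpair (by rw [h, inner_zero_left])
  have hconj_deriv : ∀ i, iteratedDeriv i (conj ∘ z ∘ conj) 0 = conj (iteratedDeriv i z 0) := by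
    simp [iteratedDeriv_conj_conj]
  tfae_have 4 → 1 := fun h4 j hj χ hχ => hφpath.inner_apply_iteratedDeriv_eq_zero h4 hj hχ
  tfae_have 1 → 4 := fun h1 =>
    hφpath.iteratedDeriv_eq_zero_of_inner_eq_zero hψ0 hpair fun j hj => h1 j hj (ψ 0) hψ0
  tfae_have 4 → 3 := fun h4 j hj χ hχ => inner_eq_zero_symm.mp <|
    hψpath.inner_apply_iteratedDeriv_eq_zero (by simpa [hconj_deriv] using h4) hj
      (by simpa using hχ)
  tfae_have 3 → 2 := fun h3 => ⟨φ 0, hφpath.apply_eq, hpair, fun j hj => h3 j hj _ hφpath.apply_eq⟩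
  tfae_have 2 → 4 := fun ⟨χ, hχ, hχψ, horth⟩ => by
    simpa [hconj_deriv] using hψpath.iteratedDeriv_eq_zero_of_inner_eq_zero (χ := χ)
      (by simpa using hχ) (by rwa [ne_eq, inner_eq_zero_symm])
      fun j hj => inner_eq_zero_symm.mp (horth j hj)
  tfae_have 4 ↔ 5 := by
    simpa [hconj_deriv] using hψpath.forall_iteratedDeriv_eq_zero_iff hψ0_ne k
  tfae_finish

/-- equivalences between the order of an eigenpath `φ` of `N_v = N₀ + vW`
and the order of a conjugate eigenpath `φ*(v) = ψ(conj v)` of `N_v*` at `v = 0`. -/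
theorem eigenpath_and_conjugate_eigenpath_order_tfae
    {H : Type*} [NormedAddCommGroup H] [InnerProductSpace ℂ H] [CompleteSpace H]
    (N₀ W : H →L[ℂ] H) (hW : IsSelfAdjoint W)
    (ρ : ℝ) (hρ : 0 < ρ)
    (z : ℂ → ℂ) (φ : ℂ → H)
    (hz : AnalyticOnNhd ℂ z (Metric.ball (0 : ℂ) ρ))
    (hφ : AnalyticOnNhd ℂ φ (Metric.ball (0 : ℂ) ρ))
    (heig : ∀ v ∈ Metric.ball (0 : ℂ) ρ, (N₀ + v • W) (φ v) = z v • φ v)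
    (hφ0 : φ 0 ≠ 0)
    (z₀ : ℂ) (hz₀ : z₀ = z 0)
    -- the conjugate eigenpath `φ*(v) = ψ(conj v)` with `ψ` analytic
    (ψ : ℂ → H) (hψ : AnalyticOnNhd ℂ ψ (Metric.ball (0 : ℂ) ρ))
    (heigψ : ∀ v ∈ Metric.ball (0 : ℂ) ρ,
      adjoint (N₀ + v • W) (ψ ((starRingEnd ℂ) v)) =
        (starRingEnd ℂ) (z v) • ψ ((starRingEnd ℂ) v))
    (hpair : ⟪ψ 0, φ 0⟫_ℂ ≠ 0)
    (k : ℕ) (hk : 1 ≤ k) :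
    [ -- (1) `φ` has order at least `k` at `0`
      ∀ j : ℕ, j + 2 ≤ k → ∀ χ : H, adjoint N₀ χ = (starRingEnd ℂ) z₀ • χ →
        ⟪χ, W (iteratedDeriv j φ 0)⟫_ℂ = 0,
      -- (2) `W ψ^(j)(0)` orthogonal to some eigenvector `χ` with `⟪ψ 0, χ⟫ ≠ 0`
      ∃ χ : H, N₀ χ = z₀ • χ ∧ ⟪ψ 0, χ⟫_ℂ ≠ 0 ∧
        ∀ j : ℕ, j + 2 ≤ k → ⟪W (iteratedDeriv j ψ 0), χ⟫_ℂ = 0,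
      -- (3) `φ*` has order at least `k` at `0`
      ∀ j : ℕ, j + 2 ≤ k → ∀ χ : H, N₀ χ = z₀ • χ →
        ⟪W (iteratedDeriv j ψ 0), χ⟫_ℂ = 0,
      -- (4) `z^(j)(0) = 0` for `j = 1, …, k-1`
      ∀ j : ℕ, 1 ≤ j → j < k → iteratedDeriv j z 0 = 0,
      -- (5) `(N₀* - conj z₀) ψ^(j)(0) = -j W ψ^(j-1)(0)` for `j = 1, …, k-1`
      ∀ j : ℕ, 1 ≤ j → j < k →
        (adjoint N₀ - (starRingEnd ℂ) z₀ • (1 : H →L[ℂ] H)) (iteratedDeriv j ψ 0) =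
          (-(j : ℂ)) • W (iteratedDeriv (j - 1) ψ 0) ].TFAE :=
  eigenpath_and_conjugate_eigenpath_order_tfae_general N₀ W hW ρ hρ z φ hz hφ heig z₀ hz₀ ψ hψ heigψ
    hpair k
end
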